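/- arXiv:math/0303183 — 4 statements merged into one kernel-verified Lean document; each statement's English description precedes it below -/
import Mathlib

section
/- Let f : ℝ^n → ℂ be a bounded continuous function. If for every compactly supported smooth function g : ℝ^n → ℂ the pointwise product f·g is smooth, then f itself is smooth. (Together with the trivial converse, this identifies the idealizer of C_c^∞(ℝ^n) inside the bounded continuous functions as the bounded smooth functions.) -/
theorem smooth_of_mul_compactly_supported_smooth
    {n : ℕ} (f : EuclideanSpace ℝ (Fin n) → ℂ)
    (hc : Continuous f) (hb : ∃ C : ℝ, ∀ x, ‖f x‖ ≤ C)
    (h : ∀ g : EuclideanSpace ℝ (Fin n) → ℂ, ContDiff ℝ (⊤ : ℕ∞) g →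
      HasCompactSupport g → ContDiff ℝ (⊤ : ℕ∞) (fun x => f x * g x)) :
    ContDiff ℝ (⊤ : ℕ∞) f := by
  rw [contDiff_iff_contDiffAt]
  intro x
  set φ : ContDiffBump x := ⟨1, 2, one_pos, one_lt_two⟩
  set g : EuclideanSpace ℝ (Fin n) → ℂ := fun y => (φ y : ℂ) with hg
  have hgsmooth : ContDiff ℝ (⊤ : ℕ∞) g :=
    Complex.ofRealCLM.contDiff.comp φ.contDiff
  have hgsupp : HasCompactSupport g :=
    φ.hasCompactSupport.comp_left (g := fun t : ℝ => (t : ℂ)) (by simp)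
  have hfg := h g hgsmooth hgsupp
  refine hfg.contDiffAt.congr_of_eventuallyEq ?_
  filter_upwards [Metric.ball_mem_nhds x one_pos] with y hy
  simp [hg, φ.one_of_mem_closedBall (Metric.ball_subset_closedBall hy)]
end

section
/- Let b : ℝ^n → ℝ be a bounded smooth function with zero set Z_b = b⁻¹({0}). Then the closure, with respect to the supremum norm, of the set {x ↦ b(x)²·a(x) : a ∈ C_c^∞(ℝ^n)} inside C₀(ℝ^n) is exactly {f ∈ C₀(ℝ^n) : f(x) = 0 for all x ∈ Z_b}. -/
/-!
If `f` vanishes on `{b = 0}`, then `g_δ = f / (b² + δ)` lies in `C₀` and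
`‖f - b² g_δ‖ = |f| δ / (b² + δ)`, which is uniformly small for small `δ`: where `|f| ≥ ε` we are on
a compact set on which `b²` is bounded below by a positive constant. Approximating `g_δ` uniformly
by a compactly supported smooth `a` (Stone–Weierstrass on a large ball, then a smooth cutoff)
changes `b² g_δ` by at most `sup b²` times the error, which is where the boundedness of `b` enters.
-/

open scoped ZeroAtInfty BoundedContinuousFunction CompactlySupported

open Set Metric Filter Topology

theorem RCLike.norm_sub_ofReal_mul_div_ofReal_add {𝕜 : Type*} [RCLike 𝕜] (z : 𝕜) {w δ : ℝ}
    (hw : 0 ≤ w) (hδ : 0 < δ) : ‖z - w * (z / (w + δ : ℝ))‖ = ‖z‖ * (δ / (w + δ)) := by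
  have hwδ : (w + δ : 𝕜) ≠ 0 := by exact_mod_cast (by linarith : w + δ ≠ 0)
  have : z - w * (z / (w + δ : ℝ)) = z * (δ / (w + δ) : ℝ) := by
    push_cast
    field_simp
    ring
  rw [this, norm_mul, RCLike.norm_of_nonneg (by positivity)]

namespace ZeroAtInftyContinuousMap

variable {X 𝕜 β : Type*} [TopologicalSpace X] [RCLike 𝕜]

theorem isCompact_setOf_le_norm [SeminormedAddGroup β] (f : C₀(X, β)) {r : ℝ} (hr : 0 < r) :
    IsCompact {x | r ≤ ‖f x‖} := by
  obtain ⟨K, hK, hKf⟩ := mem_cocompact.mp <|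
    (zero_at_infty f).norm (Iio_mem_nhds (by simpa using hr) : Iio r ∈ 𝓝 ‖(0 : β)‖)
  refine hK.of_isClosed_subset (isClosed_le continuous_const (map_continuous f).norm) ?_
  intro x hx
  by_contra hxK
  exact (hKf hxK).not_ge (show r ≤ ‖f x‖ from hx)

theorem isClosed_setOf_forall_apply_eq_zero [MetricSpace β] [Zero β] (s : Set X) :
    IsClosed {f : C₀(X, β) | ∀ x ∈ s, f x = 0} := by
  simp only [ofPred_forall]
  exact isClosed_biInter fun x _ =>
    isClosed_eq ((continuous_eval_const (F := X →ᵇ β) x).comp isometry_toBCF.continuous)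
      continuous_const

theorem dist_le [PseudoMetricSpace β] [Zero β] {f g : C₀(X, β)} {C : ℝ} (hC : 0 ≤ C) :
    dist f g ≤ C ↔ ∀ x, dist (f x) (g x) ≤ C := by
  rw [← dist_toBCF_eq_dist]
  exact BoundedContinuousFunction.dist_le hC

theorem norm_apply_le [SeminormedAddCommGroup β] (f : C₀(X, β)) (x : X) : ‖f x‖ ≤ ‖f‖ :=
  (f.toBCF.norm_coe_le_norm x).trans_eq norm_toBCF_eq_norm

theorem exists_forall_norm_sub_ofReal_mul_le {w : X → ℝ} (hw : Continuous w)
    (hw₀ : ∀ x, 0 ≤ w x) (f : C₀(X, 𝕜)) (hf : ∀ x, w x = 0 → f x = 0) {ε : ℝ} (hε : 0 < ε) :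
    ∃ g : C₀(X, 𝕜), ∀ x, ‖f x - w x * g x‖ ≤ ε := by
  obtain ⟨c, hc, hcw⟩ := (f.isCompact_setOf_le_norm hε).exists_forall_le' hw.continuousOn
    fun x (hx : ε ≤ ‖f x‖) => (hw₀ x).lt_of_ne' fun h0 => by
      rw [hf x h0, norm_zero] at hx
      linarith
  set δ := ε * c / (‖f‖ + 1)
  have hδ : 0 < δ := by positivity
  have hwδ : ∀ x, 0 < w x + δ := fun x => by linarith [hw₀ x]
  have hg_le : ∀ x, ‖f x / (w x + δ : ℝ)‖ ≤ ‖f x‖ / δ := fun x => by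
    rw [norm_div, RCLike.norm_of_nonneg (hwδ x).le]
    exact div_le_div_of_nonneg_left (norm_nonneg _) hδ (by linarith [hw₀ x])
  let g : C₀(X, 𝕜) :=
    ⟨⟨fun x => f x / (w x + δ : ℝ), (map_continuous f).div (by fun_prop)
      fun x => RCLike.ofReal_ne_zero.mpr (hwδ x).ne'⟩,
      squeeze_zero_norm hg_le (by simpa using (zero_at_infty f).norm.div_const δ)⟩
  refine ⟨g, fun x => ?_⟩
  change ‖f x - w x * (f x / (w x + δ : ℝ))‖ ≤ ε
  rw [RCLike.norm_sub_ofReal_mul_div_ofReal_add _ (hw₀ x) hδ]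
  have hfrac : 0 ≤ δ / (w x + δ) := (div_pos hδ (hwδ x)).le
  by_cases hx : ε ≤ ‖f x‖
  · calc ‖f x‖ * (δ / (w x + δ)) ≤ ‖f‖ * (δ / c) :=
          mul_le_mul (f.norm_apply_le x)
            (div_le_div_of_nonneg_left hδ.le hc (by linarith [hcw x hx])) hfrac (norm_nonneg f)
      _ = ε * (‖f‖ / (‖f‖ + 1)) := by
          simp only [δ]
          field_simp
      _ ≤ ε := mul_le_of_le_one_right hε.le ((div_le_one (by positivity)).mpr (by linarith))
  · calc ‖f x‖ * (δ / (w x + δ)) ≤ ε * 1 :=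
          mul_le_mul (not_le.mp hx).le ((div_le_one (hwδ x)).mpr (by linarith [hw₀ x])) hfrac
            hε.le
      _ = ε := mul_one ε

end ZeroAtInftyContinuousMap

section SmoothApproximation

variable {𝕜 E : Type*} [RCLike 𝕜] [NormedAddCommGroup E] [NormedSpace ℝ E]

variable (𝕜) in
def smoothRestrictions (K : Set E) : StarSubalgebra 𝕜 C(K, 𝕜) where
  carrier := {q | ∃ p : E → 𝕜, ContDiff ℝ (⊤ : ℕ∞) p ∧ ∀ x : K, q x = p x}
  mul_mem' := by
    rintro q₁ q₂ ⟨p₁, hp₁, he₁⟩ ⟨p₂, hp₂, he₂⟩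
    exact ⟨p₁ * p₂, hp₁.mul hp₂, fun x => by simp [he₁ x, he₂ x]⟩
  add_mem' := by
    rintro q₁ q₂ ⟨p₁, hp₁, he₁⟩ ⟨p₂, hp₂, he₂⟩
    exact ⟨p₁ + p₂, hp₁.add hp₂, fun x => by simp [he₁ x, he₂ x]⟩
  algebraMap_mem' c := ⟨fun _ => c, contDiff_const, fun _ => rfl⟩
  star_mem' := by
    rintro q ⟨p, hp, he⟩
    exact ⟨RCLike.conjCLE ∘ p, RCLike.conjCLE.contDiff.comp hp, fun x => by simp [he x]⟩

theorem smoothRestrictions_separatesPoints (K : Set E) :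
    (smoothRestrictions 𝕜 K).SeparatesPoints := by
  intro x y hxy
  obtain ⟨ℓ, hℓ⟩ := SeparatingDual.exists_separating_of_ne (R := ℝ) (Subtype.coe_ne_coe.mpr hxy)
  let q : C(K, 𝕜) := ⟨fun z => (ℓ z : 𝕜), by fun_prop⟩
  refine ⟨q, ⟨q, ⟨RCLike.ofRealCLM ∘ ℓ, ?_, fun _ => rfl⟩, rfl⟩, by simpa [q] using hℓ⟩
  exact (RCLike.ofRealCLM (K := 𝕜)).contDiff.comp ℓ.contDiff

theorem exists_contDiff_forall_norm_sub_le_of_isCompact {K : Set E} (hK : IsCompact K)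
    {h : E → 𝕜} (hh : ContinuousOn h K) {ε : ℝ} (hε : 0 < ε) :
    ∃ p : E → 𝕜, ContDiff ℝ (⊤ : ℕ∞) p ∧ ∀ x ∈ K, ‖h x - p x‖ ≤ ε := by
  have : CompactSpace K := isCompact_iff_compactSpace.mp hK
  let hr : C(K, 𝕜) := ⟨K.domRestrict h, hh.domRestrict⟩
  have hmem : hr ∈ closure (smoothRestrictions 𝕜 K : Set C(K, 𝕜)) := by
    rw [← StarSubalgebra.topologicalClosure_coe,
      ContinuousMap.starSubalgebra_topologicalClosure_eq_top_of_separatesPoints _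
        (smoothRestrictions_separatesPoints K)]
    trivial
  obtain ⟨q, ⟨p, hp, hqp⟩, hq⟩ := Metric.mem_closure_iff.mp hmem ε hε
  refine ⟨p, hp, fun x hx => ?_⟩
  simpa [hr, hqp, dist_eq_norm] using (ContinuousMap.dist_apply_le_dist ⟨x, hx⟩).trans hq.le

end SmoothApproximation

namespace ZeroAtInftyContinuousMap

variable {𝕜 E : Type*} [RCLike 𝕜] [NormedAddCommGroup E] [NormedSpace ℝ E] [FiniteDimensional ℝ E]

theorem exists_contDiff_hasCompactSupport_forall_norm_sub_le (g : C₀(E, 𝕜)) {ε : ℝ}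
    (hε : 0 < ε) :
    ∃ a : E → 𝕜, ContDiff ℝ (⊤ : ℕ∞) a ∧ HasCompactSupport a ∧ ∀ x, ‖g x - a x‖ ≤ ε := by
  obtain ⟨R, hR⟩ := (g.isCompact_setOf_le_norm hε).isBounded.subset_closedBall (0 : E)
  let χ : ContDiffBump (0 : E) := ⟨max R 0 + 1, max R 0 + 2, by positivity, by linarith⟩
  obtain ⟨p, hp, hgp⟩ := exists_contDiff_forall_norm_sub_le_of_isCompact
    (isCompact_closedBall (0 : E) χ.rOut) (map_continuous g).continuousOn hε
  refine ⟨fun x => (χ x : 𝕜) * p x, ((RCLike.ofRealCLM (K := 𝕜)).contDiff.comp χ.contDiff).mul hp,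
    (χ.hasCompactSupport.comp_left RCLike.ofReal_zero).mul_right, fun x => ?_⟩
  have hχ₀ : 0 ≤ χ x := χ.nonneg
  have hχ₁ : χ x ≤ 1 := χ.le_one
  -- `χ = 1` where `g` is large, and `p` approximates `g` wherever `χ ≠ 0`
  have outer : (1 - χ x) * ‖g x‖ ≤ (1 - χ x) * ε := by
    by_cases hx : ε ≤ ‖g x‖
    · have hRχ : R ≤ χ.rIn := by simp only [χ]; linarith [le_max_left R 0]
      rw [χ.one_of_mem_closedBall (closedBall_subset_closedBall hRχ (hR hx))]
      simp
    · exact mul_le_mul_of_nonneg_left (not_le.mp hx).le (by linarith)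
  have inner : χ x * ‖g x - p x‖ ≤ χ x * ε := by
    by_cases hx : x ∈ closedBall (0 : E) χ.rOut
    · exact mul_le_mul_of_nonneg_left (hgp x hx) hχ₀
    · rw [χ.zero_of_le_dist (by rw [mem_closedBall, not_le] at hx; exact hx.le)]
      simp
  calc ‖g x - χ x * p x‖ = ‖((1 - χ x : ℝ) : 𝕜) * g x + (χ x : 𝕜) * (g x - p x)‖ := by
        push_cast; ring_nf
    _ ≤ (1 - χ x) * ‖g x‖ + χ x * ‖g x - p x‖ := by
        refine (norm_add_le _ _).trans_eq ?_
        rw [norm_mul, norm_mul, RCLike.norm_of_nonneg (by linarith), RCLike.norm_of_nonneg hχ₀]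
    _ ≤ ε := by linarith

theorem exists_contDiff_hasCompactSupport_forall_norm_sub_ofReal_mul_le {w : E → ℝ}
    (hw : Continuous w) (hw₀ : ∀ x, 0 ≤ w x) {C : ℝ} (hwC : ∀ x, w x ≤ C) (f : C₀(E, 𝕜))
    (hf : ∀ x, w x = 0 → f x = 0) {ε : ℝ} (hε : 0 < ε) :
    ∃ a : E → 𝕜, ContDiff ℝ (⊤ : ℕ∞) a ∧ HasCompactSupport a ∧
      ∀ x, ‖f x - w x * a x‖ ≤ ε := by
  obtain ⟨g, hfg⟩ := f.exists_forall_norm_sub_ofReal_mul_le hw hw₀ hf (half_pos hε)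
  have hM : 0 < max C 1 := lt_max_of_lt_right one_pos
  obtain ⟨a, ha, ha_supp, hga⟩ :=
    g.exists_contDiff_hasCompactSupport_forall_norm_sub_le (div_pos (half_pos hε) hM)
  refine ⟨a, ha, ha_supp, fun x => ?_⟩
  calc ‖f x - w x * a x‖ = ‖(f x - w x * g x) + (w x : 𝕜) * (g x - a x)‖ := by ring_nf
    _ ≤ ε / 2 + max C 1 * (ε / 2 / max C 1) := by
        refine (norm_add_le _ _).trans (add_le_add (hfg x) ?_)
        rw [norm_mul, RCLike.norm_of_nonneg (hw₀ x)]
        exact mul_le_mul ((hwC x).trans (le_max_left _ _)) (hga x) (norm_nonneg _) hM.le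
    _ = ε := by field_simp; ring

end ZeroAtInftyContinuousMap

theorem closure_of_bab_eq_functions_vanishing_on_zero_set
    {n : ℕ} (b : EuclideanSpace ℝ (Fin n) → ℝ)
    (hsmooth : ContDiff ℝ (⊤ : ℕ∞) b) (hbd : ∃ C : ℝ, ∀ x, |b x| ≤ C) :
    closure {f : C₀(EuclideanSpace ℝ (Fin n), ℂ) |
        ∃ a : EuclideanSpace ℝ (Fin n) → ℂ, ContDiff ℝ (⊤ : ℕ∞) a ∧
          HasCompactSupport a ∧ ∀ x, f x = (↑(b x) : ℂ) ^ 2 * a x}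
      = {f : C₀(EuclideanSpace ℝ (Fin n), ℂ) | ∀ x ∈ b ⁻¹' {0}, f x = 0} := by
  obtain ⟨C, hC⟩ := hbd
  apply Subset.antisymm
  · refine closure_minimal ?_ (ZeroAtInftyContinuousMap.isClosed_setOf_forall_apply_eq_zero _)
    rintro f ⟨a, -, -, hfa⟩ x (hx : b x = 0)
    simp [hfa x, hx]
  · intro f hf
    refine Metric.mem_closure_iff.mpr fun ε hε => ?_
    obtain ⟨a, ha, ha_supp, hfa⟩ :=
      f.exists_contDiff_hasCompactSupport_forall_norm_sub_ofReal_mul_le (w := fun x => b x ^ 2)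
        (hsmooth.continuous.pow 2) (fun x => sq_nonneg (b x))
        (fun x => (sq_abs (b x)).symm.trans_le (pow_le_pow_left₀ (abs_nonneg _) (hC x) 2))
        (fun x hx => hf x ((pow_eq_zero_iff two_ne_zero).mp hx)) (half_pos hε)
    have hb : Continuous fun x => (b x : ℂ) ^ 2 :=
      (Complex.continuous_ofReal.comp hsmooth.continuous).pow 2
    have hF : Continuous fun x => (b x : ℂ) ^ 2 * a x := hb.mul ha.continuous
    let F : C_c(EuclideanSpace ℝ (Fin n), ℂ) :=
      ⟨⟨fun x => (b x : ℂ) ^ 2 * a x, hF⟩, ha_supp.mul_left⟩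
    refine ⟨F, ⟨a, ha, ha_supp, fun x => rfl⟩, ?_⟩
    refine ((ZeroAtInftyContinuousMap.dist_le (half_pos hε).le).mpr fun x => ?_).trans_lt
      (half_lt_self hε)
    simpa [dist_eq_norm, F] using hfa x
end

section
/- Let M be a locally compact Hausdorff space, let U ⊆ M be open, let φ : U → ℝ^m be a homeomorphism, let Z ⊆ ℝ^m be a compact set, and let ℏ > 0. Then the quotient space of M obtained by collapsing the compact set φ⁻¹((ℏ·Z) ∪ {0}) to a single point is homeomorphic to the quotient space of M obtained by collapsing φ⁻¹(Z ∪ {0}) to a single point. Here ℏ·Z = {ℏ·z : z ∈ Z}. -/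
open scoped Pointwise

/-- The quotient of a topological space obtained by collapsing the subset `Y`
to a single point, with the quotient topology. -/
abbrev Collapse {M : Type*} [TopologicalSpace M] (Y : Set M) : Type _ :=
  Quot (fun x y : M => x = y ∨ (x ∈ Y ∧ y ∈ Y))

/-!
Pick a homeomorphism of `ℝ^m` that is radial, equal to multiplication by `ℏ⁻¹` on a ball
containing `ℏ • Z ∪ {0}`, and the identity outside a larger ball; it carries `ℏ • Z ∪ {0}` onto
`Z ∪ {0}`. Since its support is compact, transporting it through `φ` and extending it by the
identity off `U` gives a homeomorphism of the Hausdorff space `M` (a compact subset of `U` is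
closed in `M`), and a homeomorphism carrying one collapsed set onto the other descends to the
quotients.
-/

open Set Filter Topology

namespace Real

/-- Slope `c` up to `a`, slope `1` from `b` on, affine in between (with slope `s`, chosen so that
the value at `b` is `b`), written as a sum of hinge functions. -/
noncomputable def scaleThenId (c a b r : ℝ) : ℝ :=
  let s := (b - c * a) / (b - a)
  c * r + (s - c) * max (r - a) 0 + (1 - s) * max (r - b) 0

variable {c a b : ℝ}

lemma scaleThenId_of_le {r : ℝ} (hab : a < b) (hr : r ≤ a) : scaleThenId c a b r = c * r := by
  simp [scaleThenId, max_eq_right (sub_nonpos.2 hr), max_eq_right (sub_nonpos.2 (hr.trans hab.le))]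

lemma scaleThenId_of_mem_Icc {r : ℝ} (hr : r ∈ Icc a b) :
    scaleThenId c a b r = c * a + (b - c * a) / (b - a) * (r - a) := by
  simp only [scaleThenId, max_eq_left (sub_nonneg.2 hr.1), max_eq_right (sub_nonpos.2 hr.2)]
  ring

lemma scaleThenId_of_ge {r : ℝ} (hab : a < b) (hr : b ≤ r) : scaleThenId c a b r = r := by
  simp only [scaleThenId, max_eq_left (sub_nonneg.2 (hab.le.trans hr)),
    max_eq_left (sub_nonneg.2 hr)]
  field_simp [sub_ne_zero.2 hab.ne']
  ring

lemma continuous_scaleThenId : Continuous (scaleThenId c a b) := by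
  unfold scaleThenId; fun_prop

lemma strictMono_scaleThenId (hc : 0 < c) (hab : a < b) (hcab : c * a < b) :
    StrictMono (scaleThenId c a b) := by
  have hs : 0 < (b - c * a) / (b - a) := div_pos (sub_pos.2 hcab) (sub_pos.2 hab)
  refine StrictMonoOn.Iic_union_Ici (a := a) ?_ ?_
  · exact (strictMono_mul_left_of_pos hc).strictMonoOn _ |>.congr
      fun r hr => (scaleThenId_of_le hab hr).symm
  · rw [← Icc_union_Ici_eq_Ici hab.le]
    refine StrictMonoOn.union ?_ ?_ (isGreatest_Icc hab.le) isLeast_Ici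
    · refine StrictMonoOn.congr (fun r _ s _ hrs => ?_) fun r hr => (scaleThenId_of_mem_Icc hr).symm
      gcongr
    · exact strictMono_id.strictMonoOn _ |>.congr fun r hr => (scaleThenId_of_ge hab hr).symm

lemma surjective_scaleThenId (hc : 0 < c) (hab : a < b) :
    Function.Surjective (scaleThenId c a b) := by
  refine continuous_scaleThenId.surjective ?_ ?_
  · exact tendsto_id.congr' <| (eventually_ge_atTop b).mono fun r hr =>
      (scaleThenId_of_ge hab hr).symm
  · exact (tendsto_id.const_mul_atBot hc).congr' <| (eventually_le_atBot a).mono fun r hr =>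
      (scaleThenId_of_le hab hr).symm

theorem exists_orderIso_eq_mul_of_le_and_eq_self_of_ge (hc : 0 < c) (a : ℝ) :
    ∃ (e : ℝ ≃o ℝ) (b : ℝ), (∀ r ≤ a, e r = c * r) ∧ ∀ r, b ≤ r → e r = r := by
  set b := max a (c * a) + 1
  have hab : a < b := by grind
  have hcab : c * a < b := by grind
  exact ⟨StrictMono.orderIsoOfSurjective _ (strictMono_scaleThenId hc hab hcab)
    (surjective_scaleThenId hc hab), b, fun r hr => scaleThenId_of_le hab hr,
    fun r hr => scaleThenId_of_ge hab hr⟩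

end Real

section Radial

variable {E : Type*} [NormedAddCommGroup E] [NormedSpace ℝ E]

noncomputable def radialMap (g : ℝ → ℝ) (x : E) : E := (g ‖x‖ / ‖x‖) • x

lemma radialMap_apply_of_eq_mul {g : ℝ → ℝ} {c : ℝ} {x : E} (h : g ‖x‖ = c * ‖x‖) :
    radialMap g x = c • x := by
  rcases eq_or_ne x 0 with rfl | hx
  · simp [radialMap]
  · rw [radialMap, h, mul_div_cancel_right₀ _ (norm_ne_zero_iff.2 hx)]

lemma norm_radialMap {g : ℝ → ℝ} (h0 : g 0 = 0) (x : E) : ‖radialMap g x‖ = |g ‖x‖| := by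
  rcases eq_or_ne x 0 with rfl | hx
  · simp [radialMap, h0]
  · rw [radialMap, norm_smul, Real.norm_eq_abs, abs_div, abs_norm,
      div_mul_cancel₀ _ (norm_ne_zero_iff.2 hx)]

lemma continuous_radialMap {g : ℝ → ℝ} (hg : Continuous g) (h0 : g 0 = 0) :
    Continuous (radialMap (E := E) g) := by
  refine continuous_iff_continuousAt.2 fun x => ?_
  rcases eq_or_ne x 0 with rfl | hx
  · rw [ContinuousAt, show radialMap g (0 : E) = 0 by simp [radialMap],
      tendsto_zero_iff_norm_tendsto_zero]
    simp_rw [norm_radialMap h0]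
    simpa [h0] using (hg.comp continuous_norm).abs.tendsto (0 : E)
  · exact ((hg.continuousAt.comp continuous_norm.continuousAt).div
      continuous_norm.continuousAt (norm_ne_zero_iff.2 hx)).smul continuousAt_id

lemma radialMap_symm_radialMap (e : ℝ ≃o ℝ) (h0 : e 0 = 0) (x : E) :
    radialMap e.symm (radialMap e x) = x := by
  rcases eq_or_ne x 0 with rfl | hx
  · simp [radialMap]
  have hpos : 0 < e ‖x‖ := h0 ▸ e.strictMono (norm_pos_iff.2 hx)
  rw [radialMap, norm_radialMap h0, abs_of_pos hpos, e.symm_apply_apply, radialMap, smul_smul,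
    div_mul_div_comm, mul_comm, div_self (by positivity), one_smul]

noncomputable def Homeomorph.radial (e : ℝ ≃o ℝ) (h0 : e 0 = 0) : E ≃ₜ E where
  toFun := radialMap e
  invFun := radialMap e.symm
  left_inv := radialMap_symm_radialMap e h0
  right_inv := radialMap_symm_radialMap e.symm (e.symm_apply_eq.2 h0.symm)
  continuous_toFun := continuous_radialMap e.continuous h0
  continuous_invFun := continuous_radialMap e.symm.continuous (e.symm_apply_eq.2 h0.symm)

theorem exists_homeomorph_eq_smul_of_norm_le_and_eq_self_of_le_norm {c : ℝ} (hc : 0 < c) {a : ℝ}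
    (ha : 0 ≤ a) :
    ∃ (H : E ≃ₜ E) (b : ℝ), (∀ x, ‖x‖ ≤ a → H x = c • x) ∧ ∀ x, b ≤ ‖x‖ → H x = x := by
  obtain ⟨e, b, he_le, he_ge⟩ := Real.exists_orderIso_eq_mul_of_le_and_eq_self_of_ge hc a
  have h0 : e 0 = 0 := by simpa using he_le 0 ha
  refine ⟨Homeomorph.radial e h0, b, fun x hx => ?_, fun x hx => ?_⟩
  · exact radialMap_apply_of_eq_mul (he_le _ hx)
  · exact (radialMap_apply_of_eq_mul (c := 1) (by rw [one_mul, he_ge _ hx])).trans (one_smul _ _)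

end Radial

section ExtendByIdentity

variable {M : Type*} {U : Set M}

open Classical in
noncomputable def extendById (U : Set M) (f : U → U) (x : M) : M :=
  if hx : x ∈ U then f ⟨x, hx⟩ else x

lemma extendById_coe (f : U → U) (x : U) : extendById U f x = f x := by
  simp [extendById]

lemma extendById_of_notMem (f : U → U) {x : M} (hx : x ∉ U) : extendById U f x = x := by
  simp [extendById, hx]

lemma extendById_extendById {f g : U → U} (h : Function.LeftInverse g f) (x : M) :
    extendById U g (extendById U f x) = x := by
  by_cases hx : x ∈ U
  · lift x to U using hx
    rw [extendById_coe, extendById_coe, h]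
  · rw [extendById_of_notMem f hx, extendById_of_notMem g hx]

lemma continuous_extendById [TopologicalSpace M] [T2Space M] (hU : IsOpen U) {f : U → U}
    (hf : Continuous f) {K : Set U} (hK : IsCompact K) (hfK : ∀ x ∉ K, f x = x) :
    Continuous (extendById U f) := by
  have hKM : IsClosed (Subtype.val '' K) := (hK.image continuous_subtype_val).isClosed
  have hU_on : ContinuousOn (extendById U f) U := by
    rw [continuousOn_iff_continuous_domRestrict]
    exact (continuous_subtype_val.comp hf).congr fun x => (extendById_coe f x).symm
  have hK_on : ContinuousOn (extendById U f) (Subtype.val '' K)ᶜ := by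
    refine continuousOn_id.congr fun x hx => ?_
    by_cases hxU : x ∈ U
    · lift x to U using hxU
      rw [extendById_coe, hfK x fun h => hx ⟨x, h, rfl⟩, id]
    · rw [extendById_of_notMem f hxU, id]
  have hcover : U ∪ (Subtype.val '' K)ᶜ = univ :=
    eq_univ_of_forall fun x => by_cases (Or.inl ·) fun hx => Or.inr fun ⟨y, _, hy⟩ => hx (hy ▸ y.2)
  rw [← continuousOn_univ, ← hcover]
  exact hU_on.union_of_isOpen hK_on hU hKM.isOpen_compl

theorem exists_homeomorph_extend [TopologicalSpace M] [T2Space M] (hU : IsOpen U) (f : U ≃ₜ U)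
    {K : Set U} (hK : IsCompact K) (hfK : ∀ x ∉ K, f x = x) :
    ∃ Φ : M ≃ₜ M, ∀ x : U, Φ x = f x := by
  have hf_symm : ∀ x ∉ K, f.symm x = x := fun x hx => f.symm_apply_eq.2 (hfK x hx).symm
  exact ⟨{ toFun := extendById U f
           invFun := extendById U f.symm
           left_inv := extendById_extendById f.symm_apply_apply
           right_inv := extendById_extendById f.apply_symm_apply
           continuous_toFun := continuous_extendById hU f.continuous hK hfK
           continuous_invFun := continuous_extendById hU f.symm.continuous hK hf_symm },
    extendById_coe f⟩

theorem exists_homeomorph_conj_chart [TopologicalSpace M] [T2Space M] (hU : IsOpen U) {X : Type*}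
    [TopologicalSpace X] (φ : U ≃ₜ X) (H : X ≃ₜ X) {L : Set X} (hL : IsCompact L)
    (hHL : ∀ x ∉ L, H x = x) :
    ∃ Φ : M ≃ₜ M, ∀ S : Set X,
      Φ '' (Subtype.val '' (φ ⁻¹' S)) = Subtype.val '' (φ ⁻¹' (H '' S)) := by
  obtain ⟨Φ, hΦ⟩ := exists_homeomorph_extend hU (φ.trans (H.trans φ.symm))
    (hL.image φ.symm.continuous) fun x hx => by
      simp [hHL (φ x) fun h => hx ⟨φ x, h, φ.symm_apply_apply x⟩]
  refine ⟨Φ, fun S => ?_⟩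
  rw [image_image, image_congr fun x _ => hΦ x, ← image_image]
  congr 1
  simp only [← Homeomorph.image_symm, image_image, Homeomorph.trans_apply,
    Homeomorph.apply_symm_apply]

end ExtendByIdentity

namespace Collapse

variable {M N : Type*} [TopologicalSpace M] [TopologicalSpace N] {Y₁ : Set M} {Y₂ : Set N}

def map (f : M → N) (hf : MapsTo f Y₁ Y₂) : Collapse Y₁ → Collapse Y₂ :=
  Quot.map f fun _ _ h => h.imp (congrArg f) fun h => ⟨hf h.1, hf h.2⟩

lemma continuous_map {f : M → N} (hf : Continuous f) (hY : MapsTo f Y₁ Y₂) :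
    Continuous (map f hY) :=
  isQuotientMap_quot_mk.continuous_iff.2 (continuous_quot_mk.comp hf)

def homeomorphOfImageEq (e : M ≃ₜ N) (h : e '' Y₁ = Y₂) : Collapse Y₁ ≃ₜ Collapse Y₂ where
  toFun := map e (h ▸ mapsTo_image e Y₁)
  invFun := map e.symm (by subst h; rintro _ ⟨x, hx, rfl⟩; rwa [e.symm_apply_apply])
  left_inv := by rintro ⟨x⟩; exact congrArg (Quot.mk _) (e.symm_apply_apply x)
  right_inv := by rintro ⟨x⟩; exact congrArg (Quot.mk _) (e.apply_symm_apply x)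
  continuous_toFun := continuous_map e.continuous _
  continuous_invFun := continuous_map e.symm.continuous _

end Collapse

theorem collapse_scaled_set_homeomorphic_general
    {M : Type*} [TopologicalSpace M] [T2Space M]
    {m : ℕ} (U : Set M) (hU : IsOpen U) (φ : U ≃ₜ EuclideanSpace ℝ (Fin m))
    (Z : Set (EuclideanSpace ℝ (Fin m))) (hZ : IsCompact Z) (ℏ : ℝ) (hℏ : 0 < ℏ) :
    Nonempty
      (Collapse (Subtype.val '' (⇑φ ⁻¹' (ℏ • Z ∪ {0}))) ≃ₜ
       Collapse (Subtype.val '' (⇑φ ⁻¹' (Z ∪ {0})))) := by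
  obtain ⟨R, hR, hZR⟩ := hZ.isBounded.subset_closedBall_lt 0 0
  obtain ⟨H, b, hH_small, hH_large⟩ :=
    exists_homeomorph_eq_smul_of_norm_le_and_eq_self_of_le_norm (E := EuclideanSpace ℝ (Fin m))
      (inv_pos.2 hℏ) (mul_nonneg hℏ.le hR.le)
  have hHZ : H '' (ℏ • Z ∪ {0}) = Z ∪ {0} := by
    have hsmall : ℏ • Z ∪ {0} ⊆ Metric.closedBall 0 (ℏ * R) := by
      rintro _ (⟨z, hz, rfl⟩ | rfl)
      · rw [mem_closedBall_zero_iff, norm_smul, Real.norm_of_nonneg hℏ.le]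
        exact mul_le_mul_of_nonneg_left (mem_closedBall_zero_iff.1 (hZR hz)) hℏ.le
      · exact Metric.mem_closedBall_self (by positivity)
    rw [EqOn.image_eq fun x hx => hH_small x (mem_closedBall_zero_iff.1 (hsmall hx)), image_smul,
      smul_set_union, smul_set_singleton, smul_zero, smul_smul, inv_mul_cancel₀ hℏ.ne', one_smul]
  obtain ⟨Φ, hΦ⟩ := exists_homeomorph_conj_chart hU φ H (isCompact_closedBall 0 b)
    fun x hx => hH_large x (not_le.1 (mt mem_closedBall_zero_iff.2 hx)).le
  refine ⟨Collapse.homeomorphOfImageEq Φ ?_⟩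
  rw [hΦ, hHZ]

theorem collapse_scaled_set_homeomorphic
    {M : Type*} [TopologicalSpace M] [LocallyCompactSpace M] [T2Space M]
    {m : ℕ} (U : Set M) (hU : IsOpen U) (φ : U ≃ₜ EuclideanSpace ℝ (Fin m))
    (Z : Set (EuclideanSpace ℝ (Fin m))) (hZ : IsCompact Z) (ℏ : ℝ) (hℏ : 0 < ℏ) :
    Nonempty
      (Collapse (Subtype.val '' (⇑φ ⁻¹' (ℏ • Z ∪ {0}))) ≃ₜ
       Collapse (Subtype.val '' (⇑φ ⁻¹' (Z ∪ {0})))) :=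
  collapse_scaled_set_homeomorphic_general U hU φ Z hZ ℏ hℏ
end

section
/- Let F : ℝ^m → ℝ be a smooth function equal to 1 outside some compact set. For 0 < ℏ ≤ 1 define b_ℏ : ℝ^m → ℝ by b_ℏ(x) = F(x/ℏ), and set b_0 = 1 (the constant function). Then for every a ∈ C₀(ℝ^m) with a(0) = 0, the map ℏ ↦ (x ↦ b_ℏ(x)²·a(x)) from [0,1] to C₀(ℝ^m) is continuous with respect to the supremum norm. -/
/-!
The map `(ℏ, x) ↦ b_ℏ(x)² a(x)` is jointly continuous on `[0,1] × ℝ^m`: for `ℏ > 0` it is a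
composition of continuous maps; near `(0, x)` with `x ≠ 0` the point `x / ℏ` is outside the
compact set where `F ≠ 1`, so `b = 1`; and at `(0, 0)` the bounded factor `b²` is killed by
`a(0) = 0`. It is also dominated by `(sup F²) ‖a‖`, which vanishes at infinity. Joint continuity
gives uniform convergence on compact sets of `x`, the domination gives uniform smallness outside
them, hence continuity in the sup norm.
-/

open scoped ZeroAtInfty Topology
open Filter Function Set

lemma continuous_smul_of_isBounded_of_continuousAt {X R V : Type*} [TopologicalSpace X]
    [NormedField R] [SeminormedAddCommGroup V] [NormedSpace R V] {u : X → R} {v : X → V}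
    (hu : Bornology.IsBounded (range u)) (hv : Continuous v)
    (huv : ∀ p, v p ≠ 0 → ContinuousAt u p) : Continuous fun p => u p • v p := by
  refine continuous_iff_continuousAt.2 fun p => ?_
  by_cases hp : v p = 0
  · obtain ⟨C, hC⟩ := isBounded_iff_forall_norm_le.1 hu
    have hbdd : IsBoundedUnder (· ≤ ·) (𝓝 p) (norm ∘ u) :=
      isBoundedUnder_of ⟨C, fun q => hC _ (mem_range_self q)⟩
    have hlim : Tendsto v (𝓝 p) (𝓝 0) := hp ▸ hv.continuousAt
    simpa [ContinuousAt, hp] using hbdd.smul_tendsto_zero hlim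
  · exact (huv p hp).smul hv.continuousAt

lemma ZeroAtInftyContinuousMap.continuous_of_continuous_uncurry_of_norm_le {X α β : Type*}
    [TopologicalSpace X] [TopologicalSpace α] [SeminormedAddGroup β] {G : X → C₀(α, β)}
    {w : α → ℝ} (hG : Continuous fun p : X × α => G p.1 p.2)
    (hw : Tendsto w (cocompact α) (𝓝 0))
    (hGw : ∀ t x, ‖G t x‖ ≤ w x) : Continuous G := by
  refine continuous_iff_continuousAt.2 fun t₀ => ?_
  refine tendsto_iff_tendstoUniformly.2 (Metric.tendstoUniformly_iff.2 fun ε hε => ?_)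
  obtain ⟨k, hk, hkw⟩ := mem_cocompact.1 (hw (Iio_mem_nhds (half_pos hε)))
  obtain ⟨v, hv, hvk⟩ := hk.mem_uniformity_of_prod (f := fun t x => G t x) hG.continuousOn
    (mem_univ t₀) (Metric.dist_mem_uniformity hε)
  filter_upwards [nhdsWithin_univ t₀ ▸ hv] with t ht x
  by_cases hx : x ∈ k
  · rw [dist_comm]
    exact hvk t ht x hx
  · have hwx : w x < ε / 2 := hkw hx
    calc dist (G t₀ x) (G t x) ≤ ‖G t₀ x‖ + ‖G t x‖ := dist_le_norm_add_norm _ _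
      _ ≤ w x + w x := add_le_add (hGw t₀ x) (hGw t x)
      _ < ε := by linarith

open Classical in
/-- `x ↦ F (x / ℏ)`, extended by `1` at `ℏ = 0` (where `F (0⁻¹ • x)` would be the junk value
`F 0`). -/
noncomputable def rescaled {𝕜 E β : Type*} [NormedField 𝕜] [NormedAddCommGroup E]
    [NormedSpace 𝕜 E] [One β] (F : E → β) (ℏ : 𝕜) (x : E) : β :=
  if ℏ = 0 then 1 else F (ℏ⁻¹ • x)

section Rescaled

variable {𝕜 E β : Type*} [NormedField 𝕜] [NormedAddCommGroup E] [NormedSpace 𝕜 E] [One β]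
  {F : E → β}

@[simp]
lemma rescaled_zero (x : E) : rescaled F (0 : 𝕜) x = 1 := if_pos rfl

lemma rescaled_of_ne_zero {ℏ : 𝕜} (hℏ : ℏ ≠ 0) (x : E) : rescaled F ℏ x = F (ℏ⁻¹ • x) :=
  if_neg hℏ

lemma range_uncurry_rescaled_subset :
    range (uncurry (rescaled (𝕜 := 𝕜) F)) ⊆ insert 1 (range F) := by
  rintro _ ⟨⟨ℏ, x⟩, rfl⟩
  by_cases hℏ : ℏ = 0
  · simp [uncurry, hℏ]
  · exact .inr ⟨_, (rescaled_of_ne_zero hℏ x).symm⟩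

lemma isBounded_range_uncurry_rescaled [PseudoMetricSpace β] (hF : Continuous F)
    (hFc : HasCompactMulSupport F) :
    Bornology.IsBounded (range (uncurry (rescaled (𝕜 := 𝕜) F))) :=
  ((hFc.isCompact_range hF).insert 1).isBounded.subset range_uncurry_rescaled_subset

lemma rescaled_eventually_eq_one (hFc : HasCompactMulSupport F) {x : E} (hx : x ≠ 0) :
    ∀ᶠ p in 𝓝 ((0 : 𝕜), x), uncurry (rescaled F) p = 1 := by
  obtain ⟨R, -, hR⟩ := hFc.exists_pos_le_norm
  have hopen : IsOpen {p : 𝕜 × E | ‖p.1‖ * R < ‖p.2‖} :=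
    isOpen_lt (by fun_prop) (by fun_prop)
  filter_upwards [hopen.mem_nhds (by simpa using hx)] with ⟨ℏ, y⟩ (hy : ‖ℏ‖ * R < ‖y‖)
  by_cases hℏ : ℏ = 0
  · simp [uncurry, hℏ]
  refine (rescaled_of_ne_zero hℏ y).trans (hR _ ?_)
  rw [norm_smul, norm_inv, inv_mul_eq_div, le_div_iff₀ (norm_pos_iff.2 hℏ), mul_comm]
  exact hy.le

variable [TopologicalSpace β]

lemma continuousAt_rescaled_of_ne_zero (hF : Continuous F) {ℏ : 𝕜} (hℏ : ℏ ≠ 0) (x : E) :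
    ContinuousAt (uncurry (rescaled F)) (ℏ, x) := by
  have hcont : ContinuousAt (fun p : 𝕜 × E => F (p.1⁻¹ • p.2)) (ℏ, x) :=
    hF.continuousAt.comp ((continuousAt_fst.inv₀ hℏ).smul continuousAt_snd)
  refine hcont.congr ?_
  filter_upwards [continuousAt_fst.eventually_ne hℏ] with p hp
  exact (rescaled_of_ne_zero hp p.2).symm

lemma continuousAt_rescaled (hF : Continuous F) (hFc : HasCompactMulSupport F) {p : 𝕜 × E}
    (h : p ≠ 0) : ContinuousAt (uncurry (rescaled F)) p := by
  obtain ⟨ℏ, x⟩ := p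
  by_cases hℏ : ℏ = 0
  · subst hℏ
    have hx : x ≠ 0 := fun hx => h (by simp [hx])
    exact continuousAt_const.congr ((rescaled_eventually_eq_one hFc hx).mono fun _ hp => hp.symm)
  · exact continuousAt_rescaled_of_ne_zero hF hℏ x

end Rescaled

lemma continuous_rescaled_smul {𝕜 E R V : Type*} [NormedField 𝕜] [NormedAddCommGroup E]
    [NormedSpace 𝕜 E] [NormedField R] [SeminormedAddCommGroup V] [NormedSpace R V] {F : E → R}
    (hF : Continuous F) (hFc : HasCompactMulSupport F) {φ : E → V} (hφ : Continuous φ)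
    (hφ0 : φ 0 = 0) :
    Continuous fun p : 𝕜 × E => rescaled F p.1 p.2 • φ p.2 := by
  refine continuous_smul_of_isBounded_of_continuousAt (u := uncurry (rescaled F))
    (isBounded_range_uncurry_rescaled hF hFc) (hφ.comp continuous_snd) fun p hp => ?_
  exact continuousAt_rescaled hF hFc fun h => hp (by rw [h]; exact hφ0)

theorem continuity_of_reparametrized_field_sections
    {m : ℕ} (F : EuclideanSpace ℝ (Fin m) → ℝ)
    (hF : ContDiff ℝ (⊤ : ℕ∞) F)
    (hF1 : ∃ K : Set (EuclideanSpace ℝ (Fin m)), IsCompact K ∧ ∀ x ∉ K, F x = 1)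
    (b : ℝ → EuclideanSpace ℝ (Fin m) → ℝ)
    (hb0 : ∀ x, b 0 x = 1)
    (hbh : ∀ ℏ : ℝ, 0 < ℏ → ℏ ≤ 1 → ∀ x, b ℏ x = F (ℏ⁻¹ • x)) :
    ∀ a : C₀(EuclideanSpace ℝ (Fin m), ℂ), a 0 = 0 →
      ∀ G : Set.Icc (0 : ℝ) 1 → C₀(EuclideanSpace ℝ (Fin m), ℂ),
        (∀ (ℏ : Set.Icc (0 : ℝ) 1) x, G ℏ x = (↑(b ℏ x) : ℂ) ^ 2 * a x) →
        Continuous G := by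
  intro a ha0 G hG
  obtain ⟨K, hK, hK1⟩ := hF1
  set F₂ : EuclideanSpace ℝ (Fin m) → ℝ := fun y => F y ^ 2
  have hF₂ : HasCompactMulSupport F₂ := .intro hK fun x hx => by simp [F₂, hK1 x hx]
  have hGF₂ : ∀ (ℏ : Icc (0 : ℝ) 1) x, G ℏ x = rescaled F₂ (ℏ : ℝ) x • a x := by
    rintro ⟨ℏ, hℏ0, hℏ1⟩ x
    rw [hG, Complex.real_smul]
    rcases hℏ0.eq_or_lt with rfl | hℏ
    · simp [hb0]
    · simp [F₂, hbh ℏ hℏ hℏ1, rescaled_of_ne_zero hℏ.ne']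
  have hF₂c : Continuous F₂ := hF.continuous.pow 2
  obtain ⟨M, hM⟩ := isBounded_iff_forall_norm_le.1
    (isBounded_range_uncurry_rescaled (𝕜 := ℝ) hF₂c hF₂)
  refine ZeroAtInftyContinuousMap.continuous_of_continuous_uncurry_of_norm_le
    (w := fun x => M * ‖a x‖) ?_ ?_ fun ℏ x => ?_
  · simp only [hGF₂]
    exact (continuous_rescaled_smul (𝕜 := ℝ) hF₂c hF₂ a.continuous ha0).comp
      (f := fun p : Icc (0 : ℝ) 1 × _ => ((p.1 : ℝ), p.2)) (by fun_prop)
  · simpa using a.zero_at_infty'.norm.const_mul M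
  · rw [hGF₂, norm_smul]
    exact mul_le_mul_of_nonneg_right (hM _ (mem_range_self ((ℏ : ℝ), x))) (norm_nonneg _)
end
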